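/- Let Φ be a 3-CNF formula with clauses C_1,…,C_n, and let E be a set consisting of c_0, …, c_{n+1} together with exactly one of a_i and na_i for each i ∈ [1,m]. If E is an elementary set for P^Φ, then for each clause C_i, at least one atom of NV(c_i) is not in E. -/

import Mathlib

structure Rule (α : Type) where
  B : Finset α
  F : Finset α
  H : Finset α

variable {α : Type}

/-- Z is outbound in Y for program P. -/
def Outbound [DecidableEq α] (P : Set (Rule α)) (Y Z : Finset α) : Prop :=
  ∃ r ∈ P, (r.H ∩ Z).Nonempty ∧ (r.B ∩ (Y \ Z)).Nonempty ∧
    r.B ∩ Z = ∅ ∧ r.H ∩ (Y \ Z) = ∅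

/-- Y is an elementary set for P. -/
def Elementary [DecidableEq α] (P : Set (Rule α)) (Y : Finset α) : Prop :=
  Y.Nonempty ∧ ∀ Z : Finset α, Z ⊂ Y → Z.Nonempty → Outbound P Y Z

/-- X is a disjunctive set for P. -/
def DisjSet [DecidableEq α] (P : Set (Rule α)) (X : Finset α) : Prop :=
  ∃ r ∈ P, 1 < (r.H ∩ X).card

/-- The projection P_X of P on a set X of atoms. -/
def proj [DecidableEq α] (P : Set (Rule α)) (X : Finset α) : Set (Rule α) :=
  {r' | ∃ r ∈ P, (r.B ∩ X).Nonempty ∧ (r.H ∩ X).Nonempty ∧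
        r' = ⟨r.B ∩ X, ∅, r.H ∩ X⟩}

/-- P is head-elementary-set-free. -/
def HEF [DecidableEq α] (P : Set (Rule α)) : Prop :=
  ∀ r ∈ P, ∀ E : Finset α, Elementary P E → (E ∩ r.H).card ≤ 1

/-- Atoms of the program `P^Φ`. -/
inductive Atom : Type
  | phi : Atom
  | a : ℕ → Atom
  | na : ℕ → Atom
  | c : ℕ → Atom
deriving DecidableEq

/-- The atom opposite to a literal (variable index, sign). -/
def oppAtom : ℕ × Bool → Atom
  | (v, true) => Atom.na v
  | (v, false) => Atom.a v

/-- The atom corresponding to a literal. -/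
def litAtom : ℕ × Bool → Atom
  | (v, true) => Atom.a v
  | (v, false) => Atom.na v

/-- NV(c_i): opposites of the atoms of the literals of clause C_i. -/
def NV (C : ℕ → Fin 3 → ℕ × Bool) (i : ℕ) : Finset Atom :=
  {oppAtom (C i 0), oppAtom (C i 1), oppAtom (C i 2)}

/-- The program `P^Φ` associated with a 3-CNF with m variables `A_1,…,A_m`
and n clauses `C_1,…,C_n`, the clauses given by `C`. -/
def PPhi (m n : ℕ) (C : ℕ → Fin 3 → ℕ × Bool) : Set (Rule Atom) :=
  ({⟨{Atom.phi}, ∅, {Atom.c 0, Atom.c (n+1)}⟩,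
    ⟨{Atom.c 0}, ∅, {Atom.c 1}⟩,
    ⟨{Atom.c (n+1), Atom.na 1}, ∅, {Atom.a 1}⟩,
    ⟨{Atom.c (n+1), Atom.a 1}, ∅, {Atom.na 1}⟩,
    ⟨{Atom.a m, Atom.na m}, ∅, {Atom.c 0}⟩} : Set (Rule Atom)) ∪
  {r | ∃ i ∈ Finset.Icc 1 n, ∃ α ∈ NV C i,
        r = ⟨{Atom.c i, α}, ∅, {Atom.c (i+1)}⟩} ∪
  {r | ∃ i ∈ Finset.Icc 1 (m-1),
        r = ⟨{Atom.a i, Atom.na (i+1)}, ∅, {Atom.a (i+1)}⟩ ∨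
        r = ⟨{Atom.a i, Atom.a (i+1)}, ∅, {Atom.na (i+1)}⟩ ∨
        r = ⟨{Atom.na i, Atom.na (i+1)}, ∅, {Atom.a (i+1)}⟩ ∨
        r = ⟨{Atom.na i, Atom.a (i+1)}, ∅, {Atom.na (i+1)}⟩}

/-- All variable indices mentioned by clauses 1..n lie in [1,m]. -/
def ValidCNF (m n : ℕ) (C : ℕ → Fin 3 → ℕ × Bool) : Prop :=
  ∀ i ∈ Finset.Icc 1 n, ∀ j : Fin 3, (C i j).1 ∈ Finset.Icc 1 m

/-- Truth assignment X satisfies the 3-CNF. -/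
def Sat (n : ℕ) (C : ℕ → Fin 3 → ℕ × Bool) (X : ℕ → Bool) : Prop :=
  ∀ i ∈ Finset.Icc 1 n, ∃ j : Fin 3, X (C i j).1 = (C i j).2

/-! If `E` contained `NV(c_i)`, remove `c_0, …, c_i` from it: what is left is a proper nonempty
subset `Z` of `E` (it keeps `c_{n+1}`). A rule showing `Z` outbound needs a body atom `c_j` with
`j ≤ i` and its head in `Z`; the only such rules are `c_i ∧ α → c_{i+1}` with `α ∈ NV(c_i)`, and
their body meets `Z` in `α`. -/

theorem oppAtom_ne_c (p : ℕ × Bool) (j : ℕ) : oppAtom p ≠ Atom.c j := by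
  obtain ⟨v, _ | _⟩ := p <;> simp [oppAtom]

theorem ne_c_of_mem_NV {C : ℕ → Fin 3 → ℕ × Bool} {i : ℕ} {β : Atom} (hβ : β ∈ NV C i)
    (j : ℕ) : β ≠ Atom.c j := by
  simp only [NV, Finset.mem_insert, Finset.mem_singleton] at hβ
  rcases hβ with rfl | rfl | rfl <;> exact oppAtom_ne_c _ j

theorem not_outbound_PPhi {m n i : ℕ} {C : ℕ → Fin 3 → ℕ × Bool} {E : Finset Atom}
    (hi : i ∈ Finset.Icc 1 n) (hcn : Atom.c (n + 1) ∈ E)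
    (hNV : NV C i ⊆ E) :
    ¬ Outbound (PPhi m n C) E (E.filter fun x => ∀ j ≤ i, x ≠ Atom.c j) := by
  obtain ⟨hi1, hin⟩ := Finset.mem_Icc.mp hi
  rintro ⟨r, hr, ⟨x, hx⟩, ⟨y, hy⟩, hBZ, -⟩
  simp only [Finset.mem_inter, Finset.mem_sdiff, Finset.mem_filter] at hx hy
  obtain ⟨hxH, hxZ⟩ := hx
  obtain ⟨hyB, hyE⟩ := hy
  simp only [Finset.eq_empty_iff_forall_notMem, Finset.mem_inter, Finset.mem_filter] at hBZ
  obtain ⟨k, hk, rfl⟩ : ∃ k ≤ i, y = Atom.c k := by simpa [hyE.1] using hyE.2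
  have hcn_notMem_B : Atom.c (n + 1) ∉ r.B := fun hB =>
    hBZ _ ⟨hB, hcn, fun j hj h => by simp at h; omega⟩
  rcases hr with (hr | ⟨j, hj, α, hα, rfl⟩) | ⟨j, -, hr⟩
  · simp only [Set.mem_insert_iff, Set.mem_singleton_iff] at hr
    rcases hr with rfl | rfl | rfl | rfl | rfl
    · simp at hyB
    · simp only [Finset.mem_singleton] at hxH
      exact hxZ.2 1 hi1 hxH
    · exact hcn_notMem_B (by simp)
    · exact hcn_notMem_B (by simp)
    · simp only [Finset.mem_singleton] at hxH
      exact hxZ.2 0 (Nat.zero_le _) hxH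
  · simp only [Finset.mem_singleton] at hxH
    subst hxH
    have hki : k = j := by
      simpa [(ne_c_of_mem_NV hα k).symm] using hyB
    have hji : j = i := by
      by_contra hne
      exact hxZ.2 (j + 1) (by omega) rfl
    subst hki hji
    exact hBZ α ⟨by simp, hNV hα, fun j _ => ne_c_of_mem_NV hα j⟩
  · rcases hr with rfl | rfl | rfl | rfl <;> simp at hyB

theorem exists_mem_NV_notMem_of_elementary {m n i : ℕ} {C : ℕ → Fin 3 → ℕ × Bool}
    {E : Finset Atom} (hE : Elementary (PPhi m n C) E) (hi : i ∈ Finset.Icc 1 n)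
    (hc0 : Atom.c 0 ∈ E) (hcn : Atom.c (n + 1) ∈ E) :
    ∃ β ∈ NV C i, β ∉ E := by
  by_contra! hNV
  set Z := E.filter fun x => ∀ j ≤ i, x ≠ Atom.c j
  have hZE : Z ⊂ E :=
    Finset.filter_ssubset.mpr ⟨Atom.c 0, hc0, by simp⟩
  have hZ : Z.Nonempty :=
    ⟨Atom.c (n + 1), Finset.mem_filter.mpr ⟨hcn, fun j hj h => by
      simp at h hi; omega⟩⟩
  exact not_outbound_PPhi hi hcn hNV (hE.2 Z hZE hZ)

theorem stmt11_general (m n : ℕ)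
    (C : ℕ → Fin 3 → ℕ × Bool)
    (Q : ℕ → Bool) (E : Finset Atom)
    (hEdef : E = (Finset.Icc 0 (n+1)).image Atom.c ∪
      (Finset.Icc 1 m).image (fun i => if Q i then Atom.a i else Atom.na i))
    (hE : Elementary (PPhi m n C) E) :
    ∀ i ∈ Finset.Icc 1 n, ∃ β ∈ NV C i, β ∉ E := by
  intro i hi
  subst hEdef
  refine exists_mem_NV_notMem_of_elementary hE hi ?_ ?_
  · exact Finset.mem_union_left _ (Finset.mem_image_of_mem _ (by simp))
  · exact Finset.mem_union_left _ (Finset.mem_image_of_mem _ (by simp))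

theorem stmt11 (m n : ℕ) (hm : 1 ≤ m) (hn : 1 ≤ n)
    (C : ℕ → Fin 3 → ℕ × Bool) (hC : ValidCNF m n C)
    (Q : ℕ → Bool) (E : Finset Atom)
    (hEdef : E = (Finset.Icc 0 (n+1)).image Atom.c ∪
      (Finset.Icc 1 m).image (fun i => if Q i then Atom.a i else Atom.na i))
    (hE : Elementary (PPhi m n C) E) :
    ∀ i ∈ Finset.Icc 1 n, ∃ β ∈ NV C i, β ∉ E :=
  stmt11_general m n C Q E hEdef hE
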